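/- Let y be an m-dimensional probability vector and y' an n-dimensional probability vector, both with components in nonincreasing order, and assume y₁ > y_m and y'₁ > y'ₙ (neither is a uniform vector). Let x ∈ S°(y) and x' ∈ S°(y'). Then x ⊕ x' is an interior point of S(y ⊕ y') if and only if y₁ > y'ₙ and y'₁ > y_m. More compactly, S°(y) ⊕ S°(y') ⊆ S°(y ⊕ y') if and only if y₁ > y'ₙ and y'₁ > y_m. -/

import Mathlib

open Finset

variable {ι κ : Type*}

/-- `eSum x l` is the sum of the `l` largest components of `x`. -/
noncomputable def eSum [Fintype ι] (x : ι → ℝ) (l : ℕ) : ℝ :=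
  sSup {r : ℝ | ∃ s : Finset ι, s.card = l ∧ r = ∑ i ∈ s, x i}

/-- Majorization `x ≺ y` for vectors over the same (finite) index type:
`e_l(x) ≤ e_l(y)` for all `1 ≤ l ≤ n - 1`, with equal total sums. -/
def Maj [Fintype ι] (x y : ι → ℝ) : Prop :=
  (∀ l : ℕ, 1 ≤ l → l < Fintype.card ι → eSum x l ≤ eSum y l) ∧
    ∑ i, x i = ∑ i, y i

/-- A probability vector: nonnegative components summing to 1. -/
def IsProbVec [Fintype ι] (x : ι → ℝ) : Prop :=
  (∀ i, 0 ≤ x i) ∧ ∑ i, x i = 1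

/-- Kronecker product of two vectors. -/
def kron (x : ι → ℝ) (c : κ → ℝ) : ι × κ → ℝ := fun p => x p.1 * c p.2

/-- `k`-fold Kronecker power of a vector. -/
def kpow (x : ι → ℝ) (k : ℕ) : (Fin k → ι) → ℝ := fun f => ∏ j, x (f j)

/-- Direct sum (concatenation) of two vectors. -/
def dsum (x : ι → ℝ) (c : κ → ℝ) : ι ⊕ κ → ℝ := Sum.elim x c

/-- `k`-fold direct sum (concatenation) of `x` with itself. -/
def dpow (x : ι → ℝ) (k : ℕ) : Fin k × ι → ℝ := fun p => x p.2

/-- `x ∈ S°(y)`: all partial-sum inequalities `e_l(x) < e_l(y)` are strict for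
`1 ≤ l ≤ n - 1`, and the total sums coincide. -/
def InteriorS [Fintype ι] (x y : ι → ℝ) : Prop :=
  (∀ l : ℕ, 1 ≤ l → l < Fintype.card ι → eSum x l < eSum y l) ∧
    ∑ i, x i = ∑ i, y i

/-- `d_x`: the number of nonzero components of `x`. -/
noncomputable def dsupp (x : ι → ℝ) : ℕ := Nat.card (Function.support x)

/-- The `α`-Renyi entropy `S^{(α)}(x)`; at `α = 1` it is the Shannon entropy. -/
noncomputable def renyi [Fintype ι] (x : ι → ℝ) (α : ℝ) : ℝ :=
  if α = 1 then -∑ i, x i * Real.logb 2 (x i)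
  else (if 0 ≤ α then (1 : ℝ) else -1) / (1 - α) *
    Real.logb 2 (∑ i, if x i = 0 then 0 else x i ^ α)

/-- The Renyi entropy of `x` is not less than that of `y`. -/
def RenyiGE [Fintype ι] [Fintype κ] (x : ι → ℝ) (y : κ → ℝ) : Prop :=
  (dsupp x > dsupp y ∧ ∀ α : ℝ, 0 ≤ α → renyi y α ≤ renyi x α) ∨
  (dsupp x = dsupp y ∧ ∀ α : ℝ, renyi y α ≤ renyi x α)

/-
The partial sums of `x ⊕ x'` split as `e_l(x ⊕ x') = max_{a + b = l} (e_a(x) + e_b(x'))`, so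
strictness can only fail where `(a, b)` is `(m, 0)` or `(0, n)`, i.e. for `l = m` or `l = n`. There
`e_m(x ⊕ x') ≥ ∑ x = ∑ y`, while `e_m(y ⊕ y') > ∑ y` exactly when some entry of `y'` exceeds some
entry of `y` (swap the two), and otherwise the `m` largest entries of `y ⊕ y'` are those of `y`.
For ordered vectors the condition reads `y'₁ > y_m`.
-/

lemma Finset.sum_le_sum_of_card_eq_of_forall_le {α β M : Type*} [AddCommMonoid M]
    [LinearOrder M] [IsOrderedAddMonoid M] {s : Finset α} {t : Finset β} {f : α → M}
    {g : β → M} (hst : s.card = t.card) (hfg : ∀ i ∈ s, ∀ j ∈ t, f i ≤ g j) :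
    ∑ i ∈ s, f i ≤ ∑ j ∈ t, g j := by
  rcases s.eq_empty_or_nonempty with rfl | hs
  · rw [Finset.card_empty, eq_comm, Finset.card_eq_zero] at hst
    simp [hst]
  obtain ⟨i, hi, hmax⟩ := s.exists_mem_eq_sup' hs f
  calc ∑ i ∈ s, f i ≤ s.card • s.sup' hs f :=
        Finset.sum_le_card_nsmul _ _ _ fun _ hi => Finset.le_sup' f hi
    _ = t.card • f i := by rw [hst, hmax]
    _ ≤ ∑ j ∈ t, g j := Finset.card_nsmul_le_sum _ _ _ (hfg i hi)

section eSum

variable {ι κ : Type*} [Fintype ι] [Fintype κ]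

lemma finite_setOf_sum_card_eq (x : ι → ℝ) (l : ℕ) :
    {r : ℝ | ∃ s : Finset ι, s.card = l ∧ r = ∑ i ∈ s, x i}.Finite := by
  refine ((Finset.univ.powersetCard l).image fun t => ∑ i ∈ t, x i).finite_toSet.subset ?_
  rintro r ⟨t, ht, rfl⟩
  simpa using ⟨t, ht, rfl⟩

lemma le_eSum (x : ι → ℝ) {s : Finset ι} : ∑ i ∈ s, x i ≤ eSum x s.card :=
  le_csSup (finite_setOf_sum_card_eq x _).bddAbove ⟨s, rfl, rfl⟩

lemma exists_eSum_eq (x : ι → ℝ) {l : ℕ} (hl : l ≤ Fintype.card ι) :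
    ∃ s : Finset ι, s.card = l ∧ eSum x l = ∑ i ∈ s, x i := by
  have hne : {r : ℝ | ∃ s : Finset ι, s.card = l ∧ r = ∑ i ∈ s, x i}.Nonempty := by
    obtain ⟨s, -, hs⟩ :=
      Finset.exists_subset_card_eq (s := Finset.univ) (n := l) (by simpa using hl)
    exact ⟨_, s, hs, rfl⟩
  exact hne.csSup_mem (finite_setOf_sum_card_eq x l)

lemma eSum_zero (x : ι → ℝ) : eSum x 0 = 0 := by
  simpa using (exists_eSum_eq x (Nat.zero_le _))

lemma eSum_card (x : ι → ℝ) : eSum x (Fintype.card ι) = ∑ i, x i := by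
  obtain ⟨s, hs, he⟩ := exists_eSum_eq x le_rfl
  rwa [(Finset.card_eq_iff_eq_univ s).mp hs] at he

lemma eSum_comp_equiv (x : ι → ℝ) (e : κ ≃ ι) (l : ℕ) : eSum (x ∘ e) l = eSum x l := by
  refine congrArg sSup (Set.ext fun r => ⟨?_, ?_⟩)
  · rintro ⟨s, rfl, rfl⟩
    exact ⟨s.map e.toEmbedding, by simp, by simp⟩
  · rintro ⟨s, rfl, rfl⟩
    exact ⟨s.map e.symm.toEmbedding, by simp, by simp⟩

lemma InteriorS.eSum_le {x y : ι → ℝ} (h : InteriorS x y) {l : ℕ} (hl : l ≤ Fintype.card ι) :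
    eSum x l ≤ eSum y l := by
  rcases Nat.eq_zero_or_pos l with rfl | hl₀
  · rw [eSum_zero, eSum_zero]
  rcases hl.eq_or_lt with rfl | hlt
  · rw [eSum_card, eSum_card, h.2]
  · exact (h.1 l hl₀ hlt).le

end eSum

section dsum

variable {ι κ : Type*}

lemma sum_dsum (x : ι → ℝ) (x' : κ → ℝ) (s : Finset (ι ⊕ κ)) :
    ∑ p ∈ s, dsum x x' p = ∑ i ∈ s.toLeft, x i + ∑ j ∈ s.toRight, x' j := by
  conv_lhs => rw [← Finset.toLeft_disjSum_toRight (u := s)]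
  exact Finset.sum_disjSum _ _ _

lemma dsum_comm (x : ι → ℝ) (x' : κ → ℝ) : dsum x' x = dsum x x' ∘ Equiv.sumComm κ ι := by
  funext p
  cases p <;> rfl

variable [Fintype ι] [Fintype κ]

lemma eSum_dsum_comm (x : ι → ℝ) (x' : κ → ℝ) (l : ℕ) :
    eSum (dsum x' x) l = eSum (dsum x x') l := by
  rw [dsum_comm, eSum_comp_equiv]

lemma eSum_add_eSum_le_eSum_dsum (x : ι → ℝ) (x' : κ → ℝ) {a b : ℕ}
    (ha : a ≤ Fintype.card ι) (hb : b ≤ Fintype.card κ) :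
    eSum x a + eSum x' b ≤ eSum (dsum x x') (a + b) := by
  obtain ⟨s, rfl, hs⟩ := exists_eSum_eq x ha
  obtain ⟨t, rfl, ht⟩ := exists_eSum_eq x' hb
  have := le_eSum (dsum x x') (s := s.disjSum t)
  rw [Finset.sum_disjSum, Finset.card_disjSum] at this
  rw [hs, ht]
  exact this

lemma exists_eSum_dsum_le (x : ι → ℝ) (x' : κ → ℝ) {l : ℕ}
    (hl : l ≤ Fintype.card ι + Fintype.card κ) :
    ∃ a b, a ≤ Fintype.card ι ∧ b ≤ Fintype.card κ ∧ a + b = l ∧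
      eSum (dsum x x') l ≤ eSum x a + eSum x' b := by
  obtain ⟨s, rfl, hs⟩ := exists_eSum_eq (dsum x x') (l := l) (by simpa using hl)
  refine ⟨s.toLeft.card, s.toRight.card, Finset.card_le_univ _, Finset.card_le_univ _,
    Finset.card_toLeft_add_card_toRight, ?_⟩
  rw [hs, sum_dsum]
  exact add_le_add (le_eSum x) (le_eSum x')

lemma sum_le_eSum_dsum_card (x : ι → ℝ) (x' : κ → ℝ) :
    ∑ i, x i ≤ eSum (dsum x x') (Fintype.card ι) := by
  simpa [eSum_card, eSum_zero] using
    eSum_add_eSum_le_eSum_dsum x x' le_rfl (Nat.zero_le (Fintype.card κ))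

lemma eSum_dsum_card_le_sum {y : ι → ℝ} {y' : κ → ℝ} (hyy' : ∀ i j, y' j ≤ y i) :
    eSum (dsum y y') (Fintype.card ι) ≤ ∑ i, y i := by
  classical
  obtain ⟨s, hs, he⟩ := exists_eSum_eq (dsum y y') (l := Fintype.card ι) (by simp)
  have hcard : s.toRight.card = s.toLeftᶜ.card := by
    rw [Finset.card_compl]
    have := Finset.card_toLeft_add_card_toRight (u := s)
    omega
  rw [he, sum_dsum, ← Finset.sum_add_sum_compl s.toLeft y]
  gcongr
  exact Finset.sum_le_sum_of_card_eq_of_forall_le hcard fun j _ i _ => hyy' i j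

lemma sum_lt_eSum_dsum_card {y : ι → ℝ} {y' : κ → ℝ} {i : ι} {j : κ} (hij : y i < y' j) :
    ∑ i, y i < eSum (dsum y y') (Fintype.card ι) := by
  classical
  have hcard : ((Finset.univ.erase i).disjSum {j}).card = Fintype.card ι := by
    rw [Finset.card_disjSum, Finset.card_erase_of_mem (Finset.mem_univ i), Finset.card_univ,
      Finset.card_singleton, Nat.sub_add_cancel (Fintype.card_pos_iff.mpr ⟨i⟩)]
  have := le_eSum (dsum y y') (s := (Finset.univ.erase i).disjSum {j})
  rw [hcard, Finset.sum_disjSum, Finset.sum_singleton] at this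
  have hsplit := Finset.sum_erase_add Finset.univ y (Finset.mem_univ i)
  change ∑ k ∈ Finset.univ.erase i, y k + y' j ≤ _ at this
  linarith

variable {x y : ι → ℝ} {x' y' : κ → ℝ}

lemma InteriorS.dsum_comm (h : InteriorS (dsum x x') (dsum y y')) :
    InteriorS (dsum x' x) (dsum y' y) := by
  refine ⟨fun l hl₁ hl₂ => ?_, ?_⟩
  · rw [eSum_dsum_comm x, eSum_dsum_comm y]
    exact h.1 l hl₁ (by simpa [add_comm] using hl₂)
  · simpa [Fintype.sum_sum_type, dsum, add_comm] using h.2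

lemma InteriorS.exists_lt_of_dsum [Nonempty ι] [Nonempty κ] (h : InteriorS x y)
    (hd : InteriorS (dsum x x') (dsum y y')) : ∃ i j, y i < y' j := by
  by_contra! hyy'
  have hlt := hd.1 (Fintype.card ι) Fintype.card_pos (by simp [Fintype.card_pos])
  have := sum_le_eSum_dsum_card x x'
  have := eSum_dsum_card_le_sum hyy'
  linarith [h.2]

lemma InteriorS.dsum_of_exists_lt (h : InteriorS x y) (h' : InteriorS x' y')
    (hyy' : ∃ i j, y i < y' j) (hy'y : ∃ j i, y' j < y i) :
    InteriorS (dsum x x') (dsum y y') := by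
  obtain ⟨i, j, hij⟩ := hyy'
  obtain ⟨j', i', hji⟩ := hy'y
  refine ⟨fun l hl₁ hl₂ => ?_, ?_⟩
  · rw [Fintype.card_sum] at hl₂
    obtain ⟨a, b, ha, hb, rfl, hle⟩ := exists_eSum_dsum_le x x' hl₂.le
    refine hle.trans_lt ?_
    have hsplit := eSum_add_eSum_le_eSum_dsum y y' ha hb
    by_cases ha' : 1 ≤ a ∧ a < Fintype.card ι
    · exact (add_lt_add_of_lt_of_le (h.1 a ha'.1 ha'.2) (h'.eSum_le hb)).trans_le hsplit
    by_cases hb' : 1 ≤ b ∧ b < Fintype.card κ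
    · exact (add_lt_add_of_le_of_lt (h.eSum_le ha) (h'.1 b hb'.1 hb'.2)).trans_le hsplit
    obtain ⟨rfl, rfl⟩ | ⟨rfl, rfl⟩ :
        (a = Fintype.card ι ∧ b = 0) ∨ (a = 0 ∧ b = Fintype.card κ) := by
      omega
    · rw [eSum_card, eSum_zero, add_zero, add_zero, h.2]
      exact sum_lt_eSum_dsum_card hij
    · rw [eSum_zero, eSum_card, zero_add, zero_add, h'.2, ← eSum_dsum_comm]
      exact sum_lt_eSum_dsum_card hji
  · simp only [Fintype.sum_sum_type, dsum, Sum.elim_inl, Sum.elim_inr, h.2, h'.2]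

theorem InteriorS.dsum_iff [Nonempty ι] [Nonempty κ] (h : InteriorS x y) (h' : InteriorS x' y') :
    InteriorS (dsum x x') (dsum y y') ↔ (∃ j i, y' j < y i) ∧ (∃ i j, y i < y' j) :=
  ⟨fun hd => ⟨h'.exists_lt_of_dsum hd.dsum_comm, h.exists_lt_of_dsum hd⟩,
    fun ⟨hy'y, hyy'⟩ => h.dsum_of_exists_lt h' hyy' hy'y⟩

end dsum

lemma exists_lt_iff_of_forall_le {α β γ : Type*} [Preorder γ] {f : α → γ} {g : β → γ}
    (a : α) (b : β) (ha : ∀ i, f a ≤ f i) (hb : ∀ j, g j ≤ g b) :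
    (∃ i j, f i < g j) ↔ f a < g b :=
  ⟨fun ⟨i, j, hij⟩ => ((ha i).trans_lt hij).trans_le (hb j), fun hab => ⟨a, b, hab⟩⟩

/-- Let `y` (dimension `m`) and `y'` (dimension `n`) be nonincreasingly ordered,
non-uniform probability vectors, `x ∈ S°(y)`, `x' ∈ S°(y')`. Then
`x ⊕ x' ∈ S°(y ⊕ y')` iff `y₁ > y'ₙ` and `y'₁ > y_m`. -/
theorem stmt9 {m n : ℕ} (hm : 0 < m) (hn : 0 < n)
    (y : Fin m → ℝ) (y' : Fin n → ℝ) (x : Fin m → ℝ) (x' : Fin n → ℝ)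
    (hya : Antitone y) (hy'a : Antitone y')
    (h : InteriorS x y) (h' : InteriorS x' y') :
    InteriorS (dsum x x') (dsum y y') ↔
      (y ⟨0, hm⟩ > y' ⟨n - 1, by omega⟩ ∧ y' ⟨0, hn⟩ > y ⟨m - 1, by omega⟩) := by
  have : Nonempty (Fin m) := ⟨⟨0, hm⟩⟩
  have : Nonempty (Fin n) := ⟨⟨0, hn⟩⟩
  have first_le {k : ℕ} (hk : 0 < k) (i : Fin k) : (⟨0, hk⟩ : Fin k) ≤ i := Nat.zero_le i.val
  have le_last {k : ℕ} (hk : 0 < k) (i : Fin k) : i ≤ ⟨k - 1, by omega⟩ := by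
    rw [Fin.le_def]
    exact Nat.le_sub_one_of_lt i.isLt
  rw [h.dsum_iff h',
    exists_lt_iff_of_forall_le _ _ (fun j => hy'a (le_last hn j)) (fun i => hya (first_le hm i)),
    exists_lt_iff_of_forall_le _ _ (fun i => hya (le_last hm i)) (fun j => hy'a (first_le hn j))]
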